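/- Let d ≥ 4 and k ≥ 2 be integers, and let d_1, …, d_k be positive integers with d = d_1 + ⋯ + d_k. Then (d-2)^3 ≥ (2d-5) + Σ_{i=1}^k (max(0, d_i - 2))^2 + Σ_{i=1}^k (max(0, d_i - 2))^3. -/

import Mathlib

/-!
Put `b i = max 0 (a i - 2)` and `s = ∑ b i`. For nonnegative terms `∑ b i ^ n ≤ s ^ n`, so it
suffices to show `2d - 5 + s² + s³ ≤ (d - 2)³`. Since `b i ≤ a i - 1`, with strict inequality as
soon as some `a i ≥ 2`, and there are at least two parts, `s ≤ d - 3`; and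
`(d - 2)³ - (d - 3)² - (d - 3)³ = (d - 2)(2d - 5) ≥ 2d - 5`.
-/

open Finset

theorem Finset.sum_pow_succ_le_pow_succ_sum {ι R : Type*} [CommSemiring R] [PartialOrder R]
    [IsOrderedRing R] {s : Finset ι} {f : ι → R} (hf : ∀ i ∈ s, 0 ≤ f i) (n : ℕ) :
    ∑ i ∈ s, f i ^ (n + 1) ≤ (∑ i ∈ s, f i) ^ (n + 1) :=
  calc ∑ i ∈ s, f i ^ (n + 1)
      = ∑ i ∈ s, f i * f i ^ n := by simp only [pow_succ']
    _ ≤ ∑ i ∈ s, f i * (∑ j ∈ s, f j) ^ n := sum_le_sum fun i hi =>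
      mul_le_mul_of_nonneg_left (pow_le_pow_left₀ (hf i hi) (single_le_sum hf hi) n) (hf i hi)
    _ = (∑ i ∈ s, f i) ^ (n + 1) := by rw [← sum_mul, pow_succ']

theorem sum_max_zero_sub_two_le {ι : Type*} [Fintype ι] (hι : 1 < Fintype.card ι)
    {a : ι → ℤ} (ha : ∀ i, 0 < a i) :
    ∑ i, max 0 (a i - 2) ≤ max 0 (∑ i, a i - 3) := by
  by_cases h : ∃ i, 2 ≤ a i
  · obtain ⟨i, hi⟩ := h
    have hlt : ∑ i, max 0 (a i - 2) < ∑ i, (a i - 1) :=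
      sum_lt_sum (fun j _ => max_le (by linarith [ha j]) (by linarith))
        ⟨i, mem_univ i, max_lt (by linarith) (by linarith)⟩
    have hsub : ∑ i, (a i - 1) = ∑ i, a i - Fintype.card ι := by
      simp [sum_sub_distrib]
    have hcard : (2 : ℤ) ≤ Fintype.card ι := by exact_mod_cast hι
    exact le_max_of_le_right (by linarith)
  · push Not at h
    have hzero : ∀ i, max 0 (a i - 2) = 0 := fun i => max_eq_left (by linarith [h i])
    simp [hzero]

theorem two_mul_sub_five_add_sq_add_pow_three_le {R : Type*} [CommRing R] [LinearOrder R]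
    [IsStrictOrderedRing R] {d s : R} (hs : 0 ≤ s) (hsd : s ≤ d - 3) :
    2 * d - 5 + s ^ 2 + s ^ 3 ≤ (d - 2) ^ 3 := by
  have hmono : s ^ 2 + s ^ 3 ≤ (d - 3) ^ 2 + (d - 3) ^ 3 := by gcongr
  nlinarith

theorem stmt_1 (d : ℤ) (k : ℕ) (hd : 4 ≤ d) (hk : 2 ≤ k)
    (a : Fin k → ℤ) (ha : ∀ i, 0 < a i) (hsum : ∑ i, a i = d) :
    (d - 2) ^ 3 ≥ (2 * d - 5) + ∑ i, (max 0 (a i - 2)) ^ 2 + ∑ i, (max 0 (a i - 2)) ^ 3 := by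
  have hb : ∀ i ∈ univ, 0 ≤ max 0 (a i - 2) := fun i _ => le_max_left _ _
  have hs : ∑ i, max 0 (a i - 2) ≤ d - 3 := by
    have := sum_max_zero_sub_two_le (by rw [Fintype.card_fin]; omega) ha
    rwa [hsum, max_eq_right (by linarith)] at this
  calc (2 * d - 5) + ∑ i, (max 0 (a i - 2)) ^ 2 + ∑ i, (max 0 (a i - 2)) ^ 3
      ≤ (2 * d - 5) + (∑ i, max 0 (a i - 2)) ^ 2 + (∑ i, max 0 (a i - 2)) ^ 3 := by
        gcongr
        exacts [sum_pow_succ_le_pow_succ_sum hb 1, sum_pow_succ_le_pow_succ_sum hb 2]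
    _ ≤ (d - 2) ^ 3 := two_mul_sub_five_add_sq_add_pow_three_le (sum_nonneg hb) hs
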